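/- Every sufficient reason is the projection of a general sufficient reason: a simple term τ is a sufficient reason for the decision on instance I in class Δ if and only if τ = I ⊓ τ' for some general sufficient reason τ', where I ⊓ τ' denotes the smallest subterm of I that implies τ'. -/

import Mathlib

open scoped Classical

/-- Formulas over finite-domain variables: each variable `X : V` has domain `D X`.
A literal of `X` is (intended to be) a nonempty proper subset of `D X`'s states. -/
inductive Form (V : Type) (D : V → Type) : Type where
  | top : Form V D
  | bot : Form V D
  | lit : (X : V) → Set (D X) → Form V D
  | neg : Form V D → Form V D
  | and : Form V D → Form V D → Form V D
  | or : Form V D → Form V D → Form V D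

namespace Form

variable {V : Type} {D : V → Type}

/-- Satisfaction of a formula by a world. -/
def sat (w : ∀ X, D X) : Form V D → Prop
  | top => True
  | bot => False
  | lit X s => w X ∈ s
  | neg φ => ¬ sat w φ
  | and φ ψ => sat w φ ∧ sat w ψ
  | or φ ψ => sat w φ ∨ sat w ψ

/-- Conditioning `Δ|x` of a formula on state `x` of variable `X`: each `X`-literal
`ℓ` is replaced by `⊤` if `x ∈ ℓ` and by `⊥` otherwise. -/
noncomputable def cond (X : V) (x : D X) : Form V D → Form V D
  | top => top
  | bot => bot
  | lit Y s => if h : X = Y then (if h ▸ x ∈ s then top else bot) else lit Y s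
  | neg φ => neg (cond X x φ)
  | and φ ψ => and (cond X x φ) (cond X x ψ)
  | or φ ψ => or (cond X x φ) (cond X x ψ)

/-- The selection operator `⊓x·Δ := (Δ|x) ∧ Δ`. -/
noncomputable def sel (X : V) (x : D X) (Δ : Form V D) : Form V D :=
  and (cond X x Δ) Δ

/-- Logical equivalence of formulas (same models). -/
def equiv (φ ψ : Form V D) : Prop := ∀ w, sat w φ ↔ sat w ψ

/-- Variable `X` occurs (appears) in the formula. -/
def occurs (X : V) : Form V D → Prop
  | top => False
  | bot => False
  | lit Y _ => Y = X
  | neg φ => occurs X φ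
  | and φ ψ => occurs X φ ∨ occurs X ψ
  | or φ ψ => occurs X φ ∨ occurs X ψ

/-- NNF: negation-free, and every literal is a nonempty proper subset of states. -/
def isNNF : Form V D → Prop
  | top => True
  | bot => True
  | lit _ s => s.Nonempty ∧ s ≠ Set.univ
  | neg _ => False
  | and φ ψ => isNNF φ ∧ isNNF ψ
  | or φ ψ => isNNF φ ∧ isNNF ψ

/-- The `X`-literal `s` occurs in the formula. -/
def litOccurs (X : V) (s : Set (D X)) : Form V D → Prop
  | top => False
  | bot => False
  | lit Y t => ∃ h : Y = X, h ▸ t = s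
  | neg φ => litOccurs X s φ
  | and φ ψ => litOccurs X s φ ∨ litOccurs X s ψ
  | or φ ψ => litOccurs X s φ ∨ litOccurs X s ψ

/-- Every literal in the formula is implied by the instance `I`
(i.e., contains `I`'s state of its variable). -/
def litsImp (I : ∀ X, D X) : Form V D → Prop
  | top => True
  | bot => True
  | lit X s => I X ∈ s
  | neg φ => litsImp I φ
  | and φ ψ => litsImp I φ ∧ litsImp I ψ
  | or φ ψ => litsImp I φ ∧ litsImp I ψ

/-- Iterated selection `⊓` over a list of variables, using states from `v`. -/
noncomputable def selList (v : ∀ X, D X) : List V → Form V D → Form V D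
  | [], Δ => Δ
  | X :: L, Δ => sel X (v X) (selList v L Δ)

/-- The general reason `⊓I·Δ`: selection applied for all states of instance `I`. -/
noncomputable def selAll [Fintype V] (I : ∀ X, D X) (Δ : Form V D) : Form V D :=
  selList I (Finset.univ : Finset V).toList Δ

noncomputable def listAnd : List (Form V D) → Form V D
  | [] => top
  | φ :: L => and φ (listAnd L)

/-- Universal literal quantification `∀x·Δ := (Δ|x) ∧ ⋀_{y ≠ x} (x ∨ Δ|y)`. -/
noncomputable def uq (X : V) [Fintype (D X)] (x : D X) (Δ : Form V D) : Form V D :=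
  letI : DecidableEq (D X) := fun _ _ => Classical.propDecidable _
  and (cond X x Δ)
    (listAnd ((((Finset.univ : Finset (D X)).erase x).toList).map
      (fun y => or (lit X ({x} : Set (D X))) (cond X y Δ))))

/-- Iterated universal literal quantification over a list of variables. -/
noncomputable def uqList [∀ X, Fintype (D X)] (v : ∀ X, D X) : List V → Form V D → Form V D
  | [], Δ => Δ
  | X :: L, Δ => uq X (v X) (uqList v L Δ)

/-- The complete reason `∀I·Δ`. -/
noncomputable def uqAll [Fintype V] [∀ X, Fintype (D X)] (I : ∀ X, D X) (Δ : Form V D) :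
    Form V D :=
  uqList I (Finset.univ : Finset V).toList Δ

end Form

/-- A term: a conjunction of literals over distinct variables. Variable `X` is
mentioned iff `lits X ≠ univ`; each literal is nonempty (terms are consistent). -/
structure MvTerm (V : Type) (D : V → Type) : Type where
  lits : ∀ X, Set (D X)
  nonempty : ∀ X, (lits X).Nonempty

/-- A clause: a disjunction of literals over distinct variables. Variable `X` is
mentioned iff `lits X ≠ ∅`; each literal is proper (clauses are never valid). -/
structure MvClause (V : Type) (D : V → Type) : Type where
  lits : ∀ X, Set (D X)
  proper : ∀ X, lits X ≠ Set.univ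

namespace MvTerm

variable {V : Type} {D : V → Type}

def tsat (w : ∀ X, D X) (τ : MvTerm V D) : Prop := ∀ X, w X ∈ τ.lits X

def vars (τ : MvTerm V D) : Set V := {X | τ.lits X ≠ Set.univ}

/-- A simple term assigns a single state to each of its variables. -/
def simple (τ : MvTerm V D) : Prop :=
  ∀ X, τ.lits X ≠ Set.univ → ∃ x, τ.lits X = ({x} : Set (D X))

end MvTerm

namespace MvClause

variable {V : Type} {D : V → Type}

def csat (w : ∀ X, D X) (σ : MvClause V D) : Prop := ∃ X, w X ∈ σ.lits X

def vars (σ : MvClause V D) : Set V := {X | σ.lits X ≠ (∅ : Set (D X))}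

/-- A simple clause: all its literals are single states. -/
def simple (σ : MvClause V D) : Prop :=
  ∀ X, σ.lits X ≠ (∅ : Set (D X)) → ∃ x, σ.lits X = ({x} : Set (D X))

end MvClause

section PrimeDefs

variable {V : Type} {D : V → Type}

def termImp (τ τ' : MvTerm V D) : Prop := ∀ w, τ.tsat w → τ'.tsat w

def clauseImp (σ σ' : MvClause V D) : Prop := ∀ w, σ.csat w → σ'.csat w

/-- A prime implicant of the set of worlds `M`: a ⊨-maximal term implying `M`. -/
def isPrimeImplicantOf (M : (∀ X, D X) → Prop) (τ : MvTerm V D) : Prop :=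
  (∀ w, τ.tsat w → M w) ∧
  ∀ τ' : MvTerm V D, (∀ w, τ'.tsat w → M w) → termImp τ τ' → τ' = τ

/-- A prime implicate of the set of worlds `M`: a ⊨-minimal clause implied by `M`. -/
def isPrimeImplicateOf (M : (∀ X, D X) → Prop) (σ : MvClause V D) : Prop :=
  (∀ w, M w → σ.csat w) ∧
  ∀ σ' : MvClause V D, (∀ w, M w → σ'.csat w) → clauseImp σ' σ → σ' = σ

/-- Remove subsumed terms: delete any term strictly implied by another in the set. -/
def removeSubsumedT (S : Set (MvTerm V D)) : Set (MvTerm V D) :=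
  {τ ∈ S | ¬ ∃ τ' ∈ S, τ' ≠ τ ∧ termImp τ τ'}

/-- Remove subsumed clauses: delete any clause strictly implying another in the set. -/
def removeSubsumedC (S : Set (MvClause V D)) : Set (MvClause V D) :=
  {σ ∈ S | ¬ ∃ σ' ∈ S, σ' ≠ σ ∧ clauseImp σ' σ}

end PrimeDefs

section Reasons

variable {V : Type} {D : V → Type}

/-- Instance `I` implies (satisfies) term `τ`. -/
def instEntailsT (I : ∀ X, D X) (τ : MvTerm V D) : Prop := MvTerm.tsat I τ

/-- Term `τ` implies formula `Δ`. -/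
def termImpF (τ : MvTerm V D) (Δ : Form V D) : Prop :=
  ∀ w, MvTerm.tsat w τ → Form.sat w Δ

/-- `τ` is a weakest term with `I ⊨ τ ⊨ Δ`. -/
def weakestTermFor (I : ∀ X, D X) (Δ : Form V D) (τ : MvTerm V D) : Prop :=
  instEntailsT I τ ∧ termImpF τ Δ ∧
  ∀ τ' : MvTerm V D, instEntailsT I τ' → termImpF τ' Δ → termImp τ τ' → τ' = τ

/-- A sufficient reason: a weakest simple term `τ` with `I ⊨ τ ⊨ Δ`. -/
def isSR (I : ∀ X, D X) (Δ : Form V D) (τ : MvTerm V D) : Prop :=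
  MvTerm.simple τ ∧ instEntailsT I τ ∧ termImpF τ Δ ∧
  ∀ τ' : MvTerm V D, MvTerm.simple τ' → instEntailsT I τ' → termImpF τ' Δ →
    termImp τ τ' → τ' = τ

/-- A general sufficient reason: a weakest term with `I ⊨ τ ⊨ Δ` that is
variable-minimal among such weakest terms. -/
def isGSR (I : ∀ X, D X) (Δ : Form V D) (τ : MvTerm V D) : Prop :=
  weakestTermFor I Δ τ ∧
  ¬ ∃ τ' : MvTerm V D, weakestTermFor I Δ τ' ∧ MvTerm.vars τ' ⊂ MvTerm.vars τ

/-- `I ⊓ τ'`: the smallest subterm of `I` that implies `τ'` (the conjunction of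
`I`'s states on the variables mentioned by `τ'`), for `I ⊨ τ'`. -/
noncomputable def projTerm (I : ∀ X, D X) (τ' : MvTerm V D) : MvTerm V D where
  lits := fun X =>
    if τ'.lits X = Set.univ then Set.univ else ({I X} : Set (D X))
  nonempty := by
    intro X
    try dsimp only
    split
    · exact ⟨I X, Set.mem_univ _⟩
    · exact ⟨I X, rfl⟩

end Reasons

/-!
Sufficient reasons and general sufficient reasons are both governed by one family of variable
sets: those of the terms `σ` with `I ⊨ σ ⊨ Δ`. A simple term satisfied by `I` is determined by its
variables (it equals `I ⊓ σ`), and by Zorn's lemma every such `σ` lies below a weakest one, which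
mentions no more variables. Hence the sufficient reasons, resp. the general sufficient reasons, are
exactly the simple terms, resp. the weakest terms, whose variable set is minimal in that family,
and `I ⊓ ·` preserves variable sets.
-/

section Terms

variable {V : Type} {D : V → Type}

theorem MvTerm.ext {τ₁ τ₂ : MvTerm V D} (h : τ₁.lits = τ₂.lits) : τ₁ = τ₂ := by
  cases τ₁; cases τ₂; congr

theorem termImp_iff_subset {τ₁ τ₂ : MvTerm V D} :
    termImp τ₁ τ₂ ↔ ∀ X, τ₁.lits X ⊆ τ₂.lits X := by
  refine ⟨fun h X x hx => ?_, fun h w hw X => h X (hw X)⟩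
  let w := Function.update (fun Y => (τ₁.nonempty Y).some) X x
  have hw : τ₁.tsat w := fun Y => by
    rcases eq_or_ne Y X with rfl | hY
    · simpa [w] using hx
    · simpa [w, hY] using (τ₁.nonempty Y).some_mem
  simpa [w] using h w hw X

theorem vars_subset_of_termImp {τ₁ τ₂ : MvTerm V D} (h : termImp τ₁ τ₂) :
    τ₂.vars ⊆ τ₁.vars := fun X hX₂ hX₁ =>
  hX₂ (Set.univ_subset_iff.1 (hX₁ ▸ termImp_iff_subset.1 h X))

variable (I : ∀ X, D X)

theorem projTerm_simple (τ : MvTerm V D) : (projTerm I τ).simple := by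
  intro X hX
  by_cases h : τ.lits X = Set.univ <;> simp_all [projTerm]

theorem instEntailsT_projTerm (τ : MvTerm V D) : instEntailsT I (projTerm I τ) := by
  intro X
  by_cases h : τ.lits X = Set.univ <;> simp [projTerm, h]

theorem projTerm_lits_eq_univ_iff (τ : MvTerm V D) (X : V) :
    (projTerm I τ).lits X = Set.univ ↔ τ.lits X = Set.univ := by
  by_cases h : τ.lits X = Set.univ
  · simp [projTerm, h]
  · simp only [projTerm, h, if_false, iff_false]
    intro hI
    have : Subsingleton (D X) := Set.subsingleton_univ_iff.1 (hI ▸ Set.subsingleton_singleton)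
    exact h (τ.nonempty X).eq_univ

theorem vars_projTerm (τ : MvTerm V D) : (projTerm I τ).vars = τ.vars :=
  Set.ext fun X => not_congr (projTerm_lits_eq_univ_iff I τ X)

variable {I}

theorem termImp_projTerm_projTerm {τ σ : MvTerm V D} (h : σ.vars ⊆ τ.vars) :
    termImp (projTerm I τ) (projTerm I σ) := by
  refine termImp_iff_subset.2 fun X => ?_
  by_cases hσ : σ.lits X = Set.univ
  · simp [projTerm, hσ]
  · have hτ : τ.lits X ≠ Set.univ := h hσ
    simp [projTerm, hσ, hτ]

theorem projTerm_congr {τ σ : MvTerm V D} (h : σ.vars = τ.vars) :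
    projTerm I σ = projTerm I τ := by
  refine MvTerm.ext (funext fun X => ?_)
  have hX : σ.lits X = Set.univ ↔ τ.lits X = Set.univ := not_iff_not.1 (Set.ext_iff.1 h X)
  simp only [projTerm, hX]

theorem projTerm_eq_self {τ : MvTerm V D} (hs : τ.simple) (hI : instEntailsT I τ) :
    projTerm I τ = τ := by
  refine MvTerm.ext (funext fun X => ?_)
  by_cases h : τ.lits X = Set.univ
  · simp [projTerm, h]
  · obtain ⟨x, hx⟩ := hs X h
    have : I X = x := by simpa [hx] using hI X
    dsimp only [projTerm]
    rw [if_neg h, hx, this]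

theorem termImpF_projTerm {τ : MvTerm V D} {Δ : Form V D} (hI : instEntailsT I τ)
    (hΔ : termImpF τ Δ) : termImpF (projTerm I τ) Δ := by
  refine fun w hw => hΔ w fun X => ?_
  by_cases h : τ.lits X = Set.univ
  · simp [h]
  · have hwX : w X = I X := by simpa [projTerm, h] using hw X
    exact hwX ▸ hI X

end Terms

namespace Form

variable {V : Type} {D : V → Type}

theorem occurs_finite (φ : Form V D) : {X | φ.occurs X}.Finite := by
  induction φ with
  | lit Y s => simp [occurs]
  | neg φ ih => exact ih
  | and φ ψ ih₁ ih₂ | or φ ψ ih₁ ih₂ => exact ih₁.union ih₂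
  | top | bot => simp [occurs]

theorem sat_congr {φ : Form V D} {w w' : ∀ X, D X} (h : ∀ X, φ.occurs X → w X = w' X) :
    φ.sat w ↔ φ.sat w' := by
  induction φ <;> simp_all [sat, occurs]

end Form

section Zorn

variable {V : Type} {D : V → Type}

theorem IsChain.exists_mem_forall_mem_of_finite {c : Set (∀ X, Set (D X))}
    (hc : IsChain (· ≤ ·) c) (hne : c.Nonempty) {w : ∀ X, D X}
    (hw : ∀ X, ∃ f ∈ c, w X ∈ f X) {T : Set V} (hT : T.Finite) :
    ∃ f ∈ c, ∀ X ∈ T, w X ∈ f X := by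
  let graph : (∀ X, Set (D X)) → Set (Σ X, D X) := fun f => {p | p.2 ∈ f p.1}
  have hdir : DirectedOn (fun f g => graph f ⊆ graph g) c := fun f hf g hg =>
    let ⟨k, hk, hfk, hgk⟩ := hc.directedOn f hf g hg
    ⟨k, hk, fun p hp => hfk p.1 hp, fun p hp => hgk p.1 hp⟩
  obtain ⟨f, hf, hsub⟩ := hdir.exists_mem_subset_of_finset_subset_biUnion hne
    (s := hT.toFinset.image fun X => ⟨X, w X⟩) (by
      intro p hp
      obtain ⟨X, -, rfl⟩ := Finset.mem_image.1 hp
      simpa [graph] using hw X)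
  exact ⟨f, hf, fun X hX =>
    hsub (a := ⟨X, w X⟩) (Finset.mem_image_of_mem _ (hT.mem_toFinset.2 hX))⟩

theorem exists_weakest_above {Δ : Form V D} {I : ∀ X, D X} {τ : MvTerm V D}
    (hI : instEntailsT I τ) (hΔ : termImpF τ Δ) :
    ∃ τ₀ : MvTerm V D, weakestTermFor I Δ τ₀ ∧ termImp τ τ₀ := by
  let s : Set (∀ X, Set (D X)) :=
    {f | (∀ X, I X ∈ f X) ∧ ∀ w : ∀ X, D X, (∀ X, w X ∈ f X) → Δ.sat w}
  -- A world in the union of a chain meets a single member of the chain on the finitely many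
  -- variables of `Δ`; elsewhere it may be replaced by `I`.
  have hchain : ∀ c ⊆ s, IsChain (· ≤ ·) c → ∀ f ∈ c, ∃ ub ∈ s, ∀ g ∈ c, g ≤ ub := by
    intro c hcs hc f hf
    refine ⟨fun X => {x | ∃ g ∈ c, x ∈ g X}, ⟨fun X => ⟨f, hf, (hcs hf).1 X⟩, fun w hw => ?_⟩,
      fun g hg X x hx => ⟨g, hg, hx⟩⟩
    obtain ⟨g, hg, hgw⟩ := hc.exists_mem_forall_mem_of_finite ⟨f, hf⟩ hw Δ.occurs_finite
    let w' : ∀ X, D X := fun X => if Δ.occurs X then w X else I X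
    have hw' : Δ.sat w' := (hcs hg).2 w' fun X => by
      by_cases hX : Δ.occurs X
      · simpa [w', hX] using hgw X hX
      · simpa [w', hX] using (hcs hg).1 X
    exact (Form.sat_congr fun X hX => by simp [w', hX]).2 hw'
  obtain ⟨m, hτm, ⟨hIm, hmΔ⟩, hmax⟩ := zorn_le_nonempty₀ s hchain τ.lits ⟨hI, hΔ⟩
  refine ⟨⟨m, fun X => ⟨I X, hIm X⟩⟩, ⟨hIm, hmΔ, fun σ hσI hσΔ hmσ => ?_⟩,
    termImp_iff_subset.2 hτm⟩
  have hmσ' : m ≤ σ.lits := termImp_iff_subset.1 hmσ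
  exact MvTerm.ext (le_antisymm (hmax ⟨hσI, hσΔ⟩ hmσ') hmσ')

end Zorn

section Minimality

variable {V : Type} {D : V → Type} {I : ∀ X, D X} {Δ : Form V D} {τ : MvTerm V D}

def implicantVars (I : ∀ X, D X) (Δ : Form V D) : Set (Set V) :=
  {S | ∃ σ : MvTerm V D, instEntailsT I σ ∧ termImpF σ Δ ∧ σ.vars = S}

theorem vars_mem_implicantVars (hI : instEntailsT I τ) (hΔ : termImpF τ Δ) :
    τ.vars ∈ implicantVars I Δ :=
  ⟨τ, hI, hΔ, rfl⟩

theorem isSR_iff_minimal :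
    isSR I Δ τ ↔ τ.simple ∧ instEntailsT I τ ∧ termImpF τ Δ ∧
      Minimal (· ∈ implicantVars I Δ) τ.vars := by
  constructor
  · rintro ⟨hs, hI, hΔ, hmax⟩
    refine ⟨hs, hI, hΔ, minimal_iff_forall_lt.2 ⟨vars_mem_implicantVars hI hΔ, ?_⟩⟩
    rintro _ hlt ⟨σ, hσI, hσΔ, rfl⟩
    have hproj : projTerm I σ = τ := by
      refine hmax _ (projTerm_simple I σ) (instEntailsT_projTerm I σ)
        (termImpF_projTerm hσI hσΔ) ?_
      rw [← projTerm_eq_self hs hI]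
      exact termImp_projTerm_projTerm hlt.le
    exact hlt.ne (by rw [← hproj, vars_projTerm])
  · rintro ⟨hs, hI, hΔ, hmin⟩
    refine ⟨hs, hI, hΔ, fun σ hσs hσI hσΔ hτσ => ?_⟩
    have hvars : σ.vars = τ.vars :=
      hmin.eq_of_subset (vars_mem_implicantVars hσI hσΔ) (vars_subset_of_termImp hτσ)
    rw [← projTerm_eq_self hσs hσI, projTerm_congr hvars, projTerm_eq_self hs hI]

theorem isGSR_iff_minimal :
    isGSR I Δ τ ↔ weakestTermFor I Δ τ ∧ Minimal (· ∈ implicantVars I Δ) τ.vars := by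
  constructor
  · rintro ⟨hw, hno⟩
    refine ⟨hw, minimal_iff_forall_lt.2 ⟨vars_mem_implicantVars hw.1 hw.2.1, ?_⟩⟩
    rintro _ hlt ⟨σ, hσI, hσΔ, rfl⟩
    obtain ⟨τ₀, hw₀, hστ₀⟩ := exists_weakest_above hσI hσΔ
    exact hno ⟨τ₀, hw₀, (vars_subset_of_termImp hστ₀).trans_ssubset hlt⟩
  · rintro ⟨hw, hmin⟩
    exact ⟨hw, fun ⟨σ, hσ, hlt⟩ => hmin.not_lt (vars_mem_implicantVars hσ.1 hσ.2.1) hlt⟩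

end Minimality

theorem sr_iff_projection_of_gsr_general {V : Type} {D : V → Type}
    (Δ : Form V D) (I : ∀ X, D X)
    (τ : MvTerm V D) :
    isSR I Δ τ ↔ ∃ τ' : MvTerm V D, isGSR I Δ τ' ∧ τ = projTerm I τ' := by
  rw [isSR_iff_minimal]
  constructor
  · rintro ⟨hs, hI, hΔ, hmin⟩
    obtain ⟨τ₀, hw, hττ₀⟩ := exists_weakest_above hI hΔ
    have hvars : τ₀.vars = τ.vars :=
      hmin.eq_of_subset (vars_mem_implicantVars hw.1 hw.2.1) (vars_subset_of_termImp hττ₀)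
    refine ⟨τ₀, isGSR_iff_minimal.2 ⟨hw, hvars ▸ hmin⟩, ?_⟩
    rw [projTerm_congr hvars, projTerm_eq_self hs hI]
  · rintro ⟨τ', hgsr, rfl⟩
    obtain ⟨hw, hmin⟩ := isGSR_iff_minimal.1 hgsr
    exact ⟨projTerm_simple I τ', instEntailsT_projTerm I τ',
      termImpF_projTerm hw.1 hw.2.1, by rwa [vars_projTerm]⟩

/-- a simple term `τ` is a sufficient reason for the decision on
instance `I` in class `Δ` iff `τ = I ⊓ τ'` for some general sufficient reason `τ'`. -/
theorem sr_iff_projection_of_gsr {V : Type} {D : V → Type}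
    (Δ : Form V D) (I : ∀ X, D X) (hI : Form.sat I Δ)
    (τ : MvTerm V D) (hτ : MvTerm.simple τ) :
    isSR I Δ τ ↔ ∃ τ' : MvTerm V D, isGSR I Δ τ' ∧ τ = projTerm I τ' :=
  sr_iff_projection_of_gsr_general Δ I τ
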